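/- arXiv:1707.01975 — 7 statements merged into one kernel-verified Lean document; each statement's English description precedes it below -/
import Mathlib

section
/- For all nonnegative integers n and positive integers k, the identity (-1)^(n-1) * C(n+k, n-1) + ∑_{j=n}^{n+k} (-1)^j * C(n+k, j) * C(j, n) * ((j-n+1) - (j-n)*n)/(j-n+1) = 0 holds in the rationals. -/
/-!
Put `j = n + i`. Since `C(n+k, n+i) C(n+i, n) = C(n+k, n) C(k, i)`, the sum is
`(-1)^n C(n+k, n) ∑ᵢ (-1)^i C(k, i) ((1 - n) + n / (i + 1))`. The alternating sum of `C(k, i)`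
vanishes for `k ≠ 0`, while `∑ᵢ (-1)^i C(k, i) / (i + 1) = 1 / (k + 1)`, so the sum equals
`(-1)^n C(n+k, n) n / (k + 1) = (-1)^n C(n+k, n-1)`, which cancels the first term.
-/

open Finset

theorem sum_range_neg_one_pow_mul_choose_of_ne_zero {R : Type*} [Ring R] {k : ℕ} (hk : k ≠ 0) :
    ∑ i ∈ range (k + 1), (-1 : R) ^ i * k.choose i = 0 := by
  have h := congrArg (Int.cast : ℤ → R) (Int.alternating_sum_range_choose_of_ne hk)
  push_cast at h
  exact h

section AlternatingSums

variable {K : Type*} [Field K] [CharZero K]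

theorem choose_div_succ_eq (k i : ℕ) :
    (k.choose i : K) / (i + 1) = (k + 1).choose (i + 1) / (k + 1) := by
  rw [div_eq_div_iff (Nat.cast_add_one_ne_zero i) (Nat.cast_add_one_ne_zero k), mul_comm]
  exact_mod_cast Nat.add_one_mul_choose_eq k i

theorem sum_range_neg_one_pow_mul_choose_div_succ (k : ℕ) :
    ∑ i ∈ range (k + 1), (-1 : K) ^ i * k.choose i / (i + 1) = 1 / (k + 1) := by
  have hshift : ∑ i ∈ range (k + 1), (-1 : K) ^ i * (k + 1).choose (i + 1) = 1 := by
    have h := sum_range_neg_one_pow_mul_choose_of_ne_zero (R := K) k.succ_ne_zero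
    rw [sum_range_succ'] at h
    simp only [pow_succ, pow_zero, Nat.choose_zero_right, Nat.cast_one, mul_one] at h
    simp only [mul_neg_one, neg_mul, sum_neg_distrib] at h
    linear_combination -h
  simp_rw [mul_div_assoc, choose_div_succ_eq, ← mul_div_assoc, ← sum_div, hshift]

theorem sum_range_neg_one_pow_mul_choose_mul_weight (n : K) {k : ℕ} (hk : k ≠ 0) :
    ∑ i ∈ range (k + 1), (-1 : K) ^ i * k.choose i * ((i + 1 - i * n) / (i + 1)) =
      n / (k + 1) := by
  have hweight (i : ℕ) : ((i : K) + 1 - i * n) / (i + 1) = (1 - n) + n / (i + 1) := by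
    field_simp
    ring
  have hsplit (i : ℕ) : (-1 : K) ^ i * k.choose i * (n / (i + 1)) =
      n * ((-1) ^ i * k.choose i / (i + 1)) := by
    ring
  simp_rw [hweight, mul_add, sum_add_distrib, ← sum_mul, hsplit, ← mul_sum,
    sum_range_neg_one_pow_mul_choose_of_ne_zero hk, sum_range_neg_one_pow_mul_choose_div_succ]
  ring

end AlternatingSums

theorem Nat.add_choose_add_mul_choose (n k i : ℕ) :
    (n + k).choose (n + i) * (n + i).choose n = (n + k).choose n * k.choose i := by
  simpa using Nat.choose_mul (n := n + k) (Nat.le_add_right n i)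

theorem stmt4 (n k : ℕ) (hk : 0 < k) :
    (-1 : ℚ) ^ (n - 1) * (if n = 0 then 0 else ((n + k).choose (n - 1) : ℚ)) +
      ∑ j ∈ Finset.Icc n (n + k),
        (-1 : ℚ) ^ j * ((n + k).choose j : ℚ) * (j.choose n : ℚ) *
          ((((j - n + 1 : ℕ) : ℚ) - ((j - n : ℕ) : ℚ) * (n : ℚ)) / ((j - n + 1 : ℕ) : ℚ)) = 0 := by
  rw [← Ico_add_one_right_eq_Icc, sum_Ico_eq_sum_range, show n + k + 1 - n = k + 1 by omega]
  have hterm (i : ℕ) : (-1 : ℚ) ^ (n + i) * ((n + k).choose (n + i) : ℚ) * ((n + i).choose n : ℚ) *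
      ((((n + i - n + 1 : ℕ) : ℚ) - ((n + i - n : ℕ) : ℚ) * n) / ((n + i - n + 1 : ℕ) : ℚ)) =
      (-1) ^ n * (n + k).choose n * ((-1) ^ i * k.choose i * ((i + 1 - i * n) / (i + 1))) := by
    have hchoose : ((n + k).choose (n + i) : ℚ) * (n + i).choose n = (n + k).choose n * k.choose i := by
      exact_mod_cast Nat.add_choose_add_mul_choose n k i
    simp only [add_tsub_cancel_left]
    push_cast
    rw [pow_add]
    linear_combination (-1) ^ n * (-1) ^ i * ((i + 1 - i * n) / (i + 1) : ℚ) * hchoose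
  simp_rw [hterm, ← mul_sum, sum_range_neg_one_pow_mul_choose_mul_weight _ hk.ne']
  obtain _ | m := n
  · simp
  have hchoose : ((m + 1 + k).choose (m + 1) : ℚ) * (m + 1) = (m + 1 + k).choose m * (k + 1) := by
    have h := Nat.choose_succ_right_eq (m + 1 + k) m
    rw [show m + 1 + k - m = k + 1 by omega] at h
    exact_mod_cast h
  rw [if_neg m.succ_ne_zero, Nat.add_sub_cancel, pow_succ]
  field_simp
  push_cast
  linear_combination -(-1) ^ m * hchoose
end

section
/- Let n be a nonnegative integer and i, i' distinct positive integers. In the polynomial ring ℂ[α, c], the linear polynomial α + (i - i')c divides C(n+i, n) * ∏_{l=i+1}^{i+n} (α + l·c) - C(n+i', n) * ∏_{l=i'+1}^{i'+n} (-α + l·c), where i > i'. -/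
/-!
Modulo `u = α + (i - i') c` we have `α ≡ (i' - i) c`, so the factors `α + l c` for
`l = i+1, …, i+n` become `(i'+1) c, …, (i'+n) c`, and symmetrically the factors `-α + l c`
for `l = i'+1, …, i'+n` become `(i+1) c, …, (i+n) c`. Both terms of the difference are then
`c^n` times an integer, and the two integers agree since
`C(n+i, n) (i'+1)⋯(i'+n) = C(n+i, n) C(n+i', n) n! = C(n+i', n) (i+1)⋯(i+n)`.
-/

open MvPolynomial Finset Nat

theorem Nat.choose_mul_ascFactorial_comm (n i j : ℕ) :
    (n + i).choose n * (j + 1).ascFactorial n = (n + j).choose n * (i + 1).ascFactorial n := by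
  rw [ascFactorial_eq_factorial_mul_choose, ascFactorial_eq_factorial_mul_choose,
    add_comm j, add_comm i]
  ring

theorem Finset.prod_Icc_sub_mul_add_mul {R : Type*} [CommRing R] (n i j : ℕ) (c : R) :
    ∏ l ∈ Icc (i + 1) (i + n), (((j : R) - i) * c + l * c) = (j + 1).ascFactorial n * c ^ n := by
  have hfactor (k : ℕ) :
      ((j : R) - i) * c + ((i + 1 + k : ℕ) : R) * c = ((j + 1 + k : ℕ) : R) * c := by
    push_cast
    ring
  rw [← Ico_add_one_right_eq_Icc, prod_Ico_eq_prod_range, show i + n + 1 - (i + 1) = n by omega]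
  simp only [hfactor, prod_mul_distrib, prod_const, card_range, ascFactorial_eq_prod_range,
    Nat.cast_prod]

theorem choose_mul_prod_sub_choose_mul_prod_eq_zero {R : Type*} [CommRing R] (n i j : ℕ) (c : R) :
    ((n + i).choose n : R) * ∏ l ∈ Icc (i + 1) (i + n), (((j : R) - i) * c + l * c)
      - ((n + j).choose n : R) * ∏ l ∈ Icc (j + 1) (j + n), (((i : R) - j) * c + l * c) = 0 := by
  rw [prod_Icc_sub_mul_add_mul, prod_Icc_sub_mul_add_mul, ← mul_assoc, ← mul_assoc,
    ← Nat.cast_mul, ← Nat.cast_mul, choose_mul_ascFactorial_comm, sub_self]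

theorem add_sub_mul_dvd_choose_mul_prod_sub_choose_mul_prod {R : Type*} [CommRing R]
    (n i j : ℕ) (α c : R) :
    α + ((i : R) - j) * c ∣
      ((n + i).choose n : R) * ∏ l ∈ Icc (i + 1) (i + n), (α + l * c)
        - ((n + j).choose n : R) * ∏ l ∈ Icc (j + 1) (j + n), (-α + l * c) := by
  rw [← Ideal.Quotient.eq_zero_iff_dvd]
  set I := Ideal.span {α + ((i : R) - j) * c}
  set π := Ideal.Quotient.mk I
  have hu : π α + ((i : R ⧸ I) - j) * π c = 0 := by
    simpa only [map_add, map_mul, map_sub, map_natCast] using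
      Ideal.Quotient.eq_zero_iff_mem.mpr (Ideal.mem_span_singleton_self (α + ((i : R) - j) * c))
  have hα : π α = ((j : R ⧸ I) - i) * π c := by linear_combination hu
  have hnegα : -π α = ((i : R ⧸ I) - j) * π c := by linear_combination -hu
  simp only [map_sub, map_mul, map_prod, map_add, map_neg, map_natCast, hnegα]
  simp only [hα]
  exact choose_mul_prod_sub_choose_mul_prod_eq_zero n i j (π c)

theorem stmt6_general (n : ℕ) (i i' : ℕ) :
    let α : MvPolynomial (Fin 2) ℂ := X 0
    let c : MvPolynomial (Fin 2) ℂ := X 1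
    (α + C ((i : ℂ) - (i' : ℂ)) * c) ∣
      (C (((n + i).choose n : ℕ) : ℂ) * ∏ l ∈ Finset.Icc (i + 1) (i + n), (α + C (l : ℂ) * c)
        - C (((n + i').choose n : ℕ) : ℂ) * ∏ l ∈ Finset.Icc (i' + 1) (i' + n), (-α + C (l : ℂ) * c)) := by
  simpa only [map_sub, map_natCast] using
    add_sub_mul_dvd_choose_mul_prod_sub_choose_mul_prod n i i' (X 0 : MvPolynomial (Fin 2) ℂ) (X 1)

theorem stmt6 (n : ℕ) (i i' : ℕ) (hi : 0 < i') (hii' : i' < i) :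
    let α : MvPolynomial (Fin 2) ℂ := X 0
    let c : MvPolynomial (Fin 2) ℂ := X 1
    (α + C ((i : ℂ) - (i' : ℂ)) * c) ∣
      (C (((n + i).choose n : ℕ) : ℂ) * ∏ l ∈ Finset.Icc (i + 1) (i + n), (α + C (l : ℂ) * c)
        - C (((n + i').choose n : ℕ) : ℂ) * ∏ l ∈ Finset.Icc (i' + 1) (i' + n), (-α + C (l : ℂ) * c)) :=
  stmt6_general n i i'
end

section
/- Let n be a positive integer and i' a positive integer. In ℂ[α, c], the polynomial -α + i'·c divides (a_{i',n}·α + i'·b_{i',n}·c) * ∏_{l=i'+1}^{i'+n-1}(-α + l·c) - ∏_{l=0}^{n-1}(α + l·c), where a_{i',n} = C(n+i'-1, n)*(n-1) and b_{i',n} = C(n+i'-1, n)*(i' - (i'-1)n)/i'. -/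
/-!
Modulo `-α + i' c` one may substitute `α = i' c`. Then both products become scalar multiples of
powers of `c`: `(n-1)! c^(n-1)` and the rising factorial `i' (i'+1) ⋯ (i'+n-1) c^n`. The scalars
match because `(a + b) i' = n · C(n+i'-1, n)` and `n! · C(n+i'-1, n)` is that rising factorial.
-/

open MvPolynomial Finset
open scoped Nat

section ProductsAtSubstitution

variable {R : Type*} [CommRing R]

lemma prod_Icc_neg_natCast_mul_add (i n : ℕ) (hn : 0 < n) (z : R) :
    ∏ l ∈ Icc (i + 1) (i + n - 1), (-(i * z) + l * z) = (n - 1)! * z ^ (n - 1) := by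
  obtain ⟨m, rfl⟩ : ∃ m, n = m + 1 := ⟨n - 1, by omega⟩
  rw [Nat.add_sub_cancel, ← add_assoc, Nat.add_sub_cancel, ← Ico_add_one_right_eq_Icc,
    prod_Ico_eq_prod_range, show i + m + 1 - (i + 1) = m by omega]
  have hterm : ∀ k ∈ range m, -(i * z) + ((i + 1 + k : ℕ) : R) * z = ((k + 1 : ℕ) : R) * z := by
    intro k _
    push_cast
    ring
  rw [prod_congr rfl hterm, prod_mul_distrib, prod_const, card_range, ← Nat.cast_prod,
    prod_range_add_one_eq_factorial]

lemma prod_range_natCast_mul_add (i n : ℕ) (z : R) :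
    ∏ l ∈ range n, (i * z + l * z) = i.ascFactorial n * z ^ n := by
  simp_rw [← add_mul, prod_mul_distrib, prod_const, card_range, Nat.ascFactorial_eq_prod_range,
    Nat.cast_prod, Nat.cast_add]

end ProductsAtSubstitution

theorem neg_add_natCast_mul_dvd_sub_prod {A : Type*} [CommRing A] (x z p q : A) (i n : ℕ)
    (hn : 0 < n) (hpq : (p * i + q) * (n - 1)! = i.ascFactorial n) :
    (-x + i * z) ∣ (p * x + q * z) * ∏ l ∈ Icc (i + 1) (i + n - 1), (-x + l * z)
      - ∏ l ∈ range n, (x + l * z) := by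
  rw [← Ideal.Quotient.eq_zero_iff_dvd]
  set π := Ideal.Quotient.mk (Ideal.span {-x + (i : A) * z})
  have hx : π x = i * π z := by
    have h := Ideal.Quotient.mk_singleton_self (-x + (i : A) * z)
    rw [map_add, map_neg, map_mul, map_natCast] at h
    linear_combination -h
  have hpq' := congrArg π hpq
  simp only [map_mul, map_add, map_natCast] at hpq'
  simp only [map_sub, map_mul, map_prod, map_add, map_neg, map_natCast, hx,
    prod_Icc_neg_natCast_mul_add i n hn, prod_range_natCast_mul_add]
  obtain ⟨m, rfl⟩ : ∃ m, n = m + 1 := ⟨n - 1, by omega⟩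
  simp only [Nat.add_sub_cancel] at hpq' ⊢
  linear_combination π z ^ (m + 1) * hpq'

noncomputable def coeffA (n i : ℕ) : ℂ := ((n + i - 1).choose n : ℂ) * ((n : ℂ) - 1)

noncomputable def coeffB (n i : ℕ) : ℂ :=
  ((n + i - 1).choose n : ℂ) * (((i : ℂ) - ((i - 1 : ℕ) : ℂ) * (n : ℂ)) / (i : ℂ))

lemma coeffA_mul_add_mul_coeffB_mul_factorial (n i : ℕ) (hn : 0 < n) :
    (coeffA n i * i + i * coeffB n i) * (n - 1)! = i.ascFactorial n := by
  obtain ⟨m, rfl⟩ : ∃ m, n = m + 1 := ⟨n - 1, by omega⟩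
  rcases i with _ | k
  -- for `i = 0` the binomial `C(n-1, n)` vanishes, and so does `0.ascFactorial n`
  · simp [coeffA, coeffB, Nat.zero_ascFactorial]
  · rw [Nat.ascFactorial_eq_factorial_mul_choose', coeffA, coeffB, add_comm (m + 1) (k + 1),
      Nat.factorial_succ]
    push_cast
    field_simp
    ring

theorem stmt9_general (n i' : ℕ) (hn : 0 < n) :
    let α : MvPolynomial (Fin 2) ℂ := X 0
    let c : MvPolynomial (Fin 2) ℂ := X 1
    let a : ℂ := ((n + i' - 1).choose n : ℂ) * ((n : ℂ) - 1)
    let b : ℂ := ((n + i' - 1).choose n : ℂ) * (((i' : ℂ) - ((i' - 1 : ℕ) : ℂ) * (n : ℂ)) / (i' : ℂ))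
    (-α + C (i' : ℂ) * c) ∣
      ((C a * α + C ((i' : ℂ) * b) * c) * ∏ l ∈ Finset.Icc (i' + 1) (i' + n - 1), (-α + C (l : ℂ) * c)
        - ∏ l ∈ Finset.range n, (α + C (l : ℂ) * c)) := by
  intro α c a b
  have hab : (C a * (i' : MvPolynomial (Fin 2) ℂ) + C ((i' : ℂ) * b))
      * (((n - 1)! : ℕ) : MvPolynomial (Fin 2) ℂ)
      = (i'.ascFactorial n : MvPolynomial (Fin 2) ℂ) := by
    have h := congrArg (C (σ := Fin 2)) (coeffA_mul_add_mul_coeffB_mul_factorial n i' hn)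
    simp only [map_mul, map_add, map_natCast] at h ⊢
    exact h
  simpa only [map_natCast] using neg_add_natCast_mul_dvd_sub_prod α c _ _ i' n hn hab

theorem stmt9 (n i' : ℕ) (hn : 0 < n) (hi' : 0 < i') :
    let α : MvPolynomial (Fin 2) ℂ := X 0
    let c : MvPolynomial (Fin 2) ℂ := X 1
    let a : ℂ := ((n + i' - 1).choose n : ℂ) * ((n : ℂ) - 1)
    let b : ℂ := ((n + i' - 1).choose n : ℂ) * (((i' : ℂ) - ((i' - 1 : ℕ) : ℂ) * (n : ℂ)) / (i' : ℂ))
    (-α + C (i' : ℂ) * c) ∣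
      ((C a * α + C ((i' : ℂ) * b) * c) * ∏ l ∈ Finset.Icc (i' + 1) (i' + n - 1), (-α + C (l : ℂ) * c)
        - ∏ l ∈ Finset.range n, (α + C (l : ℂ) * c)) :=
  stmt9_general n i' hn
end

section
/- Let Z_fin = { (z₁, z₂) ∈ ℂ[α] × ℂ[α] | α divides z₁ - z₂ }. If sequences (a_j)_{j≥0} and (b_j)_{j≥0} in Z_fin each satisfy the higher-order congruence relations, i.e., for every m ≥ 0, ∑_{j=0}^{m} (-1)^j C(m,j) a_j ∈ ((-α)^m, α^m)·Z_fin and similarly for (b_j), then the componentwise product sequence (a_j · b_j)_{j≥0} also satisfies these relations: for every m ≥ 0, ∑_{j=0}^{m} (-1)^j C(m,j) (a_j · b_j) ∈ ((-α)^m, α^m)·Z_fin. -/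
/-!
With `S = Z_fin` and `w = (-X, X) ∈ S`, put `I n = wⁿ·S`; up to the sign `(-1)ᵐ` the alternating
sums are the iterated forward differences `Δᵐ a 0`, so the hypotheses read `Δᵐ a 0 ∈ I m`.
The `I n` form a decreasing multiplicative filtration. The discrete Leibniz rule
`Δ(fg) = Δf · g(· + 1) + f · Δg` then shows, by induction on `n`, that `Δⁿ f 0 ∈ I (n + d)` and
`Δⁿ g 0 ∈ I (n + e)` for all `n` force `Δⁿ (fg) 0 ∈ I (n + d + e)`: the shift `g(· + 1)` stays in
the class because `Δⁿ g 1 = Δⁿ g 0 + Δⁿ⁺¹ g 0`.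
-/

open Finset Polynomial fwdDiff

lemma sum_neg_one_pow_mul_choose_smul {k G : Type*} [Ring k] [AddCommGroup G] [Module k G]
    (f : ℕ → G) (m : ℕ) :
    ∑ j ∈ range (m + 1), ((-1 : k) ^ j * m.choose j) • f j = (-1 : ℤ) ^ m • (Δ_[1])^[m] f 0 := by
  rw [fwdDiff_iter_eq_sum_shift, smul_sum]
  refine sum_congr rfl fun j hj => ?_
  obtain ⟨i, rfl⟩ := Nat.exists_eq_add_of_le (Nat.lt_succ_iff.mp (mem_range.mp hj))
  rw [smul_smul, ← Int.cast_smul_eq_zsmul k, Nat.add_sub_cancel_left, smul_eq_mul, mul_one,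
    zero_add]
  congr 1
  push_cast
  rw [← mul_assoc, pow_add, mul_assoc ((-1 : k) ^ j), ← pow_add, ← two_mul, pow_mul]
  simp

lemma neg_one_pow_zsmul_mem_iff {G : Type*} [AddGroup G] {H : AddSubgroup G} {x : G} (m : ℕ) :
    (-1 : ℤ) ^ m • x ∈ H ↔ x ∈ H := by
  rcases neg_one_pow_eq_or ℤ m with h | h <;> simp [h]

lemma fwdDiff_mul {M R : Type*} [AddCommMonoid M] [Ring R] (h : M) (f g : M → R) :
    Δ_[h] (f * g) = Δ_[h] f * (fun x => g (x + h)) + f * Δ_[h] g := by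
  ext x
  simp only [fwdDiff, Pi.mul_apply, Pi.add_apply]
  noncomm_ring

lemma fwdDiff_iter_comp_add_one_zero {G : Type*} [AddCommGroup G] (g : ℕ → G) (n : ℕ) :
    (Δ_[1])^[n] (fun x => g (x + 1)) 0 = (Δ_[1])^[n] g 0 + (Δ_[1])^[n + 1] g 0 := by
  rw [fwdDiff_iter_comp_add, Function.iterate_succ_apply', fwdDiff, add_sub_cancel]

theorem fwdDiff_iter_mul_mem {R : Type*} [Ring R] {I : ℕ → AddSubgroup R} (hI : Antitone I)
    (hmul : ∀ {k l : ℕ} {x y : R}, x ∈ I k → y ∈ I l → x * y ∈ I (k + l)) (n : ℕ) {d e : ℕ}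
    {f g : ℕ → R} (hf : ∀ n, (Δ_[1])^[n] f 0 ∈ I (n + d))
    (hg : ∀ n, (Δ_[1])^[n] g 0 ∈ I (n + e)) :
    (Δ_[1])^[n] (f * g) 0 ∈ I (n + (d + e)) := by
  induction n generalizing d e f g with
  | zero => simpa using hmul (by simpa using hf 0) (by simpa using hg 0)
  | succ n ih =>
    have hΔ : ∀ {c : ℕ} {u : ℕ → R}, (∀ n, (Δ_[1])^[n] u 0 ∈ I (n + c)) →
        ∀ n, (Δ_[1])^[n] (Δ_[1] u) 0 ∈ I (n + (c + 1)) := fun hu n => by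
      rw [← Function.iterate_succ_apply]
      convert hu (n + 1) using 2
      omega
    have hshift : ∀ n, (Δ_[1])^[n] (fun x => g (x + 1)) 0 ∈ I (n + e) := fun n => by
      rw [fwdDiff_iter_comp_add_one_zero]
      exact add_mem (hg n) (hI (by omega) (hg (n + 1)))
    rw [Function.iterate_succ_apply, fwdDiff_mul, fwdDiff_iter_add]
    refine add_mem ?_ ?_
    · convert ih (hΔ hf) hshift using 2
      omega
    · convert ih hf (hΔ hg) using 2
      omega

namespace Subring

variable {R : Type*} [CommRing R] (S : Subring R) (w : R)

def powMul (n : ℕ) : AddSubgroup R :=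
  S.toAddSubgroup.map (AddMonoidHom.mulLeft (w ^ n))

variable {S w}

lemma mem_powMul {n : ℕ} {x : R} : x ∈ S.powMul w n ↔ ∃ s ∈ S, w ^ n * s = x :=
  AddSubgroup.mem_map

lemma powMul_antitone (hw : w ∈ S) : Antitone (S.powMul w) := by
  refine antitone_nat_of_succ_le fun n x hx => ?_
  obtain ⟨s, hs, rfl⟩ := mem_powMul.mp hx
  exact mem_powMul.mpr ⟨w * s, S.mul_mem hw hs, by ring⟩

lemma mul_mem_powMul {k l : ℕ} {x y : R} (hx : x ∈ S.powMul w k) (hy : y ∈ S.powMul w l) :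
    x * y ∈ S.powMul w (k + l) := by
  obtain ⟨s, hs, rfl⟩ := mem_powMul.mp hx
  obtain ⟨t, ht, rfl⟩ := mem_powMul.mp hy
  exact mem_powMul.mpr ⟨s * t, S.mul_mem hs ht, by ring⟩

end Subring

def pairsCongrMod {A : Type*} [CommRing A] (p : A) : Subring (A × A) :=
  ((Ideal.Quotient.mk (Ideal.span {p})).comp (RingHom.fst A A)).eqLocus
    ((Ideal.Quotient.mk (Ideal.span {p})).comp (RingHom.snd A A))

lemma mem_pairsCongrMod {A : Type*} [CommRing A] {p : A} {z : A × A} :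
    z ∈ pairsCongrMod p ↔ p ∣ z.1 - z.2 := by
  simp [pairsCongrMod, Ideal.Quotient.eq, Ideal.mem_span_singleton]

theorem stmt13_general
    (Zfin : Set (Polynomial ℂ × Polynomial ℂ))
    (hZ : Zfin = {z | X ∣ z.1 - z.2})
    (a b : ℕ → Polynomial ℂ × Polynomial ℂ)
    (hca : ∀ m : ℕ, ∃ z ∈ Zfin,
      ∑ j ∈ Finset.range (m + 1), ((-1 : ℂ) ^ j * (m.choose j : ℂ)) • a j
        = ((-X) ^ m, X ^ m) * z)
    (hcb : ∀ m : ℕ, ∃ z ∈ Zfin,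
      ∑ j ∈ Finset.range (m + 1), ((-1 : ℂ) ^ j * (m.choose j : ℂ)) • b j
        = ((-X) ^ m, X ^ m) * z) :
    ∀ m : ℕ, ∃ z ∈ Zfin,
      ∑ j ∈ Finset.range (m + 1), ((-1 : ℂ) ^ j * (m.choose j : ℂ)) • (a j * b j)
        = ((-X) ^ m, X ^ m) * z := by
  set S := pairsCongrMod (X : ℂ[X])
  obtain rfl : Zfin = S := hZ.trans (Set.ext fun _ => mem_pairsCongrMod.symm)
  have hw : ((-X, X) : ℂ[X] × ℂ[X]) ∈ S := mem_pairsCongrMod.mpr ⟨-2, by ring⟩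
  have hsum_mem_iff : ∀ (f : ℕ → ℂ[X] × ℂ[X]) (m : ℕ),
      (∃ z ∈ (S : Set _), ∑ j ∈ range (m + 1), ((-1 : ℂ) ^ j * (m.choose j : ℂ)) • f j
        = ((-X) ^ m, X ^ m) * z) ↔ (Δ_[1])^[m] f 0 ∈ S.powMul (-X, X) m := by
    intro f m
    rw [← neg_one_pow_zsmul_mem_iff m, ← sum_neg_one_pow_mul_choose_smul (k := ℂ),
      Subring.mem_powMul]
    simp only [SetLike.mem_coe, Prod.pow_mk, eq_comm]
  exact fun m => (hsum_mem_iff (a * b) m).mpr <| by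
    simpa using fwdDiff_iter_mul_mem (Subring.powMul_antitone hw) Subring.mul_mem_powMul m
      (d := 0) (e := 0) (fun n => (hsum_mem_iff a n).mp (hca n)) (fun n => (hsum_mem_iff b n).mp (hcb n))

theorem stmt13
    (Zfin : Set (Polynomial ℂ × Polynomial ℂ))
    (hZ : Zfin = {z | X ∣ z.1 - z.2})
    (a b : ℕ → Polynomial ℂ × Polynomial ℂ)
    (ha : ∀ j, a j ∈ Zfin) (hb : ∀ j, b j ∈ Zfin)
    (hca : ∀ m : ℕ, ∃ z ∈ Zfin,
      ∑ j ∈ Finset.range (m + 1), ((-1 : ℂ) ^ j * (m.choose j : ℂ)) • a j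
        = ((-X) ^ m, X ^ m) * z)
    (hcb : ∀ m : ℕ, ∃ z ∈ Zfin,
      ∑ j ∈ Finset.range (m + 1), ((-1 : ℂ) ^ j * (m.choose j : ℂ)) • b j
        = ((-X) ^ m, X ^ m) * z) :
    ∀ m : ℕ, ∃ z ∈ Zfin,
      ∑ j ∈ Finset.range (m + 1), ((-1 : ℂ) ^ j * (m.choose j : ℂ)) • (a j * b j)
        = ((-X) ^ m, X ^ m) * z :=
  stmt13_general Zfin hZ a b hca hcb
end

section
/- Let Z_fin = { (z₁, z₂) ∈ ℂ[α] × ℂ[α] | α divides z₁ - z₂ }, and fix n ≥ 0. Define a_j = 0 for j < n and a_j = C(j, n) · ((-α)^n, α^n) for j ≥ n. Then for every m ≥ 0, ∑_{j=0}^{m} (-1)^j C(m,j) a_j belongs to ((-α)^m, α^m)·Z_fin. -/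
/-!
Because `C(j, n) = 0` for `j < n`, every `a j` is `C(j, n) • ((-X)^n, X^n)`, so the alternating
sum is a scalar multiple of `((-X)^n, X^n)`. Via `C(m, j) C(j, n) = C(m, n) C(m - n, j - n)` the
scalar is `(-1)^n C(m, n) (1 - 1)^(m - n)`, i.e. `(-1)^m` if `m = n` and `0` otherwise. Hence the
sum is either `0` or `((-X)^m, X^m)` times the constant pair `((-1)^m, (-1)^m)`, whose difference
vanishes.
-/

open Polynomial Finset

theorem Int.alternating_sum_range_choose_mul_choose (m n : ℕ) :
    ∑ j ∈ Finset.range (m + 1), ((-1) ^ j * m.choose j * j.choose n : ℤ) =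
      if m = n then (-1) ^ m else 0 := by
  rcases lt_or_ge m n with hmn | hnm
  · rw [if_neg hmn.ne]
    refine sum_eq_zero fun j hj => ?_
    rw [Nat.choose_eq_zero_of_lt (show j < n by grind), Nat.cast_zero, mul_zero]
  obtain ⟨k, rfl⟩ := Nat.exists_eq_add_of_le hnm
  have hchoose (i : ℕ) :
      ((n + k).choose (n + i) * (n + i).choose n : ℤ) = (n + k).choose n * k.choose i := by
    have := Nat.choose_mul (n := n + k) (k := n + i) (s := n) (by omega)
    simp only [Nat.add_sub_cancel_left] at this
    exact_mod_cast this
  calc ∑ j ∈ Finset.range (n + k + 1), ((-1) ^ j * (n + k).choose j * j.choose n : ℤ)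
      = ∑ i ∈ Finset.range (k + 1),
          ((-1) ^ (n + i) * (n + k).choose (n + i) * (n + i).choose n : ℤ) := by
        rw [add_assoc, sum_range_add, add_eq_right]
        refine sum_eq_zero fun j hj => ?_
        rw [Nat.choose_eq_zero_of_lt (mem_range.mp hj), Nat.cast_zero, mul_zero]
    _ = (-1) ^ n * (n + k).choose n *
          ∑ i ∈ Finset.range (k + 1), ((-1) ^ i * k.choose i : ℤ) := by
        rw [mul_sum]
        refine sum_congr rfl fun i _ => ?_
        rw [mul_assoc, hchoose, pow_add]
        ring
    _ = if n + k = n then (-1) ^ (n + k) else 0 := by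
        rw [Int.alternating_sum_range_choose]
        rcases Nat.eq_zero_or_pos k with rfl | hk
        · simp
        · rw [if_neg hk.ne', if_neg (by omega), mul_zero]

theorem stmt14 (n : ℕ)
    (a : ℕ → Polynomial ℂ × Polynomial ℂ)
    (ha : ∀ j, a j = if j < n then 0 else (j.choose n : ℂ) • ((-X) ^ n, X ^ n)) :
    ∀ m : ℕ, ∃ z : Polynomial ℂ × Polynomial ℂ, X ∣ z.1 - z.2 ∧
      ∑ j ∈ Finset.range (m + 1), ((-1 : ℂ) ^ j * (m.choose j : ℂ)) • a j
        = ((-X) ^ m, X ^ m) * z := by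
  intro m
  have ha_smul (j : ℕ) : a j = (j.choose n : ℂ) • ((-X) ^ n, X ^ n) := by
    rw [ha j]
    split_ifs with hj
    · rw [Nat.choose_eq_zero_of_lt hj, Nat.cast_zero, zero_smul]
    · rfl
  have hsum : ∑ j ∈ range (m + 1), ((-1 : ℂ) ^ j * (m.choose j : ℂ)) • a j =
      (if m = n then (-1 : ℂ) ^ m else 0) • (((-X) ^ n, X ^ n) : ℂ[X] × ℂ[X]) := by
    simp only [ha_smul, smul_smul, ← sum_smul]
    congr 1
    exact_mod_cast Int.alternating_sum_range_choose_mul_choose m n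
  rw [hsum]
  by_cases hmn : m = n
  · subst hmn
    refine ⟨(C ((-1) ^ m), C ((-1) ^ m)), by simp, ?_⟩
    ext <;> simp [Polynomial.smul_eq_C_mul, mul_comm]
  · exact ⟨0, by simp, by rw [if_neg hmn, zero_smul, mul_zero]⟩
end

section
/- Suppose f, g ∈ ℂ[α, c] satisfy ∏_{l=1}^{n}(-α + lc) ∣ f, ∏_{l=1}^{n}(α + lc) ∣ g, and α ∣ g - f, for some n ≥ 0. Then the product ∏_{l=1}^{n}(α + lc) · ∏_{l=1}^{n}(-α + lc) divides g · ∏_{l=1}^{n}(-α + lc) − f · ∏_{l=1}^{n}(α + lc), and moreover α divides g · ∏_{l=1}^{n}(-α + lc) − f · ∏_{l=1}^{n}(α + lc). -/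
/-!
Modulo `α = X 0` the factors `-α + l c` and `α + l c` agree, so the two products are congruent
modulo `α`; together with `g ≡ f` this gives `g ∏(-α + l c) ≡ f ∏(α + l c)`.
-/

open MvPolynomial

theorem stmt16 (n : ℕ) (f g : MvPolynomial (Fin 2) ℂ)
    (hf : (∏ l ∈ Finset.Icc 1 n, (-X 0 + C (l : ℂ) * X 1)) ∣ f)
    (hg : (∏ l ∈ Finset.Icc 1 n, (X 0 + C (l : ℂ) * X 1)) ∣ g)
    (hfg : (X 0 : MvPolynomial (Fin 2) ℂ) ∣ g - f) :
    ((∏ l ∈ Finset.Icc 1 n, (X 0 + C (l : ℂ) * X 1)) * ∏ l ∈ Finset.Icc 1 n, (-X 0 + C (l : ℂ) * X 1)) ∣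
      (g * ∏ l ∈ Finset.Icc 1 n, (-X 0 + C (l : ℂ) * X 1)
        - f * ∏ l ∈ Finset.Icc 1 n, (X 0 + C (l : ℂ) * X 1)) ∧
    (X 0 : MvPolynomial (Fin 2) ℂ) ∣
      (g * ∏ l ∈ Finset.Icc 1 n, (-X 0 + C (l : ℂ) * X 1)
        - f * ∏ l ∈ Finset.Icc 1 n, (X 0 + C (l : ℂ) * X 1)) := by
  set P : MvPolynomial (Fin 2) ℂ := ∏ l ∈ Finset.Icc 1 n, (X 0 + C (l : ℂ) * X 1)
  set Q : MvPolynomial (Fin 2) ℂ := ∏ l ∈ Finset.Icc 1 n, (-X 0 + C (l : ℂ) * X 1)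
  refine ⟨dvd_sub (mul_dvd_mul hg dvd_rfl) ?_, ?_⟩
  · rw [mul_comm P Q]
    exact mul_dvd_mul hf dvd_rfl
  have hQP : Q ≡ P [SMOD Ideal.span {(X 0 : MvPolynomial (Fin 2) ℂ)}] :=
    SModEq.prod fun l _ ↦ SModEq.sub_mem.2 <| Ideal.mem_span_singleton.2 ⟨-2, by ring⟩
  rw [← Ideal.mem_span_singleton, ← SModEq.sub_mem] at hfg ⊢
  exact hfg.mul hQP
end

section
/- Suppose f, g ∈ ℂ[α, c] are homogeneous of degree n with ∏_{l=1}^{n}(-α + lc) ∣ f, ∏_{l=1}^{n}(α + lc) ∣ g, and α ∣ g − f. Then there exists s ∈ ℂ such that f = s · ∏_{l=1}^{n}(-α + lc) and g = s · ∏_{l=1}^{n}(α + lc). -/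
/-!
A nonzero homogeneous polynomial of degree `n` dividing a homogeneous polynomial of degree `n`
leaves a constant cofactor, so `f = s • ∏ (-α + l c)` and `g = t • ∏ (α + l c)`. At `α = 0` both
products take the same nonzero value, and `α ∣ g - f` then forces `s = t`.
-/

open MvPolynomial

namespace MvPolynomial

variable {σ R : Type*}

lemma eq_C_of_isHomogeneous_mul [CommRing R] [IsDomain R] {m : ℕ} {A p : MvPolynomial σ R}
    (hA : A.IsHomogeneous m) (hA0 : A ≠ 0) (hAp : (A * p).IsHomogeneous m) :
    p = C (p.coeff 0) := by
  rcases eq_or_ne p 0 with rfl | hp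
  · simp
  rw [← totalDegree_eq_zero_iff_eq_C]
  have hdeg := totalDegree_mul_of_isDomain hA0 hp
  rw [hAp.totalDegree (mul_ne_zero hA0 hp), hA.totalDegree hA0] at hdeg
  omega

lemma isHomogeneous_prod_add_C_mul_X [CommSemiring R] {P : MvPolynomial σ R}
    (hP : P.IsHomogeneous 1) (i : σ) (n : ℕ) :
    (∏ l ∈ Finset.Icc 1 n, (P + C (l : R) * X i)).IsHomogeneous n := by
  convert IsHomogeneous.prod _ (fun l : ℕ => P + C (l : R) * X i) (fun _ => 1)
    fun l _ => hP.add (isHomogeneous_C_mul_X _ i)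
  simp

lemma eval_prod_add_C_mul_X [CommSemiring R] {P : MvPolynomial σ R} {x : σ → R}
    (hP : eval x P = 0) (i : σ) (n : ℕ) :
    eval x (∏ l ∈ Finset.Icc 1 n, (P + C (l : R) * X i)) =
      ∏ l ∈ Finset.Icc 1 n, (l * x i : R) := by
  simp [hP]

lemma eval_eq_of_X_dvd_sub [CommRing R] {f g : MvPolynomial σ R} {i : σ} {x : σ → R}
    (h : X i ∣ g - f) (hx : x i = 0) : eval x f = eval x g := by
  obtain ⟨w, hw⟩ := h
  have hw' := congrArg (eval x) hw
  rw [map_sub, map_mul, eval_X, hx, zero_mul, sub_eq_zero] at hw'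
  exact hw'.symm

end MvPolynomial

theorem stmt17 (n : ℕ) (f g : MvPolynomial (Fin 2) ℂ)
    (hfhom : f.IsHomogeneous n) (hghom : g.IsHomogeneous n)
    (hf : (∏ l ∈ Finset.Icc 1 n, (-X 0 + C (l : ℂ) * X 1)) ∣ f)
    (hg : (∏ l ∈ Finset.Icc 1 n, (X 0 + C (l : ℂ) * X 1)) ∣ g)
    (hfg : (X 0 : MvPolynomial (Fin 2) ℂ) ∣ g - f) :
    ∃ s : ℂ, f = C s * ∏ l ∈ Finset.Icc 1 n, (-X 0 + C (l : ℂ) * X 1) ∧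
             g = C s * ∏ l ∈ Finset.Icc 1 n, (X 0 + C (l : ℂ) * X 1) := by
  set A : MvPolynomial (Fin 2) ℂ := ∏ l ∈ Finset.Icc 1 n, (-X 0 + C (l : ℂ) * X 1)
  set B : MvPolynomial (Fin 2) ℂ := ∏ l ∈ Finset.Icc 1 n, (X 0 + C (l : ℂ) * X 1)
  set x : Fin 2 → ℂ := ![0, 1]
  have hAx : eval x A = ∏ l ∈ Finset.Icc 1 n, (l : ℂ) := by
    rw [eval_prod_add_C_mul_X (by simp [x])]
    simp [x]
  have hBx : eval x B = ∏ l ∈ Finset.Icc 1 n, (l : ℂ) := by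
    rw [eval_prod_add_C_mul_X (by simp [x])]
    simp [x]
  have hprod : ∏ l ∈ Finset.Icc 1 n, (l : ℂ) ≠ 0 :=
    Finset.prod_ne_zero_iff.mpr fun l hl => by
      exact_mod_cast (Nat.one_le_iff_ne_zero.mp (Finset.mem_Icc.mp hl).1)
  have hA0 : A ≠ 0 := fun h => hprod (by rw [← hAx, h, map_zero])
  have hB0 : B ≠ 0 := fun h => hprod (by rw [← hBx, h, map_zero])
  obtain ⟨p, rfl⟩ := hf
  obtain ⟨q, rfl⟩ := hg
  obtain ⟨s, rfl⟩ : ∃ s, p = C s := ⟨_, eq_C_of_isHomogeneous_mul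
    (isHomogeneous_prod_add_C_mul_X (isHomogeneous_X ℂ 0).neg 1 n) hA0 hfhom⟩
  obtain ⟨t, rfl⟩ : ∃ t, q = C t := ⟨_, eq_C_of_isHomogeneous_mul
    (isHomogeneous_prod_add_C_mul_X (isHomogeneous_X ℂ 0) 1 n) hB0 hghom⟩
  have hst : s = t := by
    have hfg0 := eval_eq_of_X_dvd_sub hfg (x := x) rfl
    rw [eval_mul, eval_mul, eval_C, eval_C, hAx, hBx] at hfg0
    exact mul_left_cancel₀ hprod hfg0
  exact ⟨s, mul_comm _ _, hst ▸ mul_comm _ _⟩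
end
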